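/- arXiv:0907.0568 — 2 statements merged into one kernel-verified Lean document; each statement's English description precedes it below -/
import Mathlib

section
/- The group with presentation ⟨A, B | A^{2k+1} = B^{2k+1} = (AB)^{2k+1} = 1, (A^{-1}B^k)^2 = 1, (B^k A^{k-1})^3 = 1⟩ is isomorphic to the triangle group Δ(2,3,2k+1) = ⟨α, u, v | α^{2k+1} = u^3 = v^2 = αuv = 1⟩, via A ↦ α², B ↦ vα²v, with inverse sending α ↦ A^{k+1}, u ↦ A^{-1}B^k A^k, v ↦ A^k B^k A^k. -/
/-- Relations of the `(2,3,n)` von Dyck triangle group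
`⟨α, u, v | αⁿ = u³ = v² = αuv = 1⟩` on generators `α = 0`, `u = 1`, `v = 2`. -/
def triangle23Rels (n : ℕ) : Set (FreeGroup (Fin 3)) :=
  {FreeGroup.of 0 ^ n, FreeGroup.of 1 ^ 3, FreeGroup.of 2 ^ 2,
    FreeGroup.of 0 * FreeGroup.of 1 * FreeGroup.of 2}

/-- Relations of the group
`⟨A, B | A^{2k+1} = B^{2k+1} = (AB)^{2k+1} = (A⁻¹Bᵏ)² = (BᵏA^{k-1})³ = 1⟩`
on generators `A = 0`, `B = 1`. -/
def imageRels (k : ℕ) : Set (FreeGroup (Fin 2)) :=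
  {FreeGroup.of 0 ^ (2 * k + 1), FreeGroup.of 1 ^ (2 * k + 1),
    (FreeGroup.of 0 * FreeGroup.of 1) ^ (2 * k + 1),
    ((FreeGroup.of 0)⁻¹ * FreeGroup.of 1 ^ k) ^ 2,
    (FreeGroup.of 1 ^ k * FreeGroup.of 0 ^ (k - 1)) ^ 3}

/-!
Both presentations are controlled by an element `α` of odd order `2k+1` and an involution `v`
with `(α⁻¹v)³ = 1` (in `Δ(2,3,2k+1)` one has `u = α⁻¹v`). Since `α` has odd order, `α` and `α²`
are powers of each other, `(α²)^{k+1} = α` and `(α²)^k = α⁻¹`, so the two maps are mutually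
inverse on `A` and `α`. The order-3 relation enters only through `vα⁻¹v = αvα`, equivalently
`vα²v = (αvα · αvα)⁻¹`. In `Δ` this gives the remaining relations of `A = α²`, `B = vα²v`;
in the other group it is applied to `α = A^{k+1}`, `v = AᵏBᵏAᵏ`, for which `αvα = Bᵏ`,
and it returns `vα²v = (B^{2k})⁻¹ = B`.
-/

namespace PresentedGroup

theorem lift_of_eq_one {α : Type*} {rels : Set (FreeGroup α)} {r : FreeGroup α}
    (hr : r ∈ rels) : FreeGroup.lift (of (rels := rels)) r = 1 := by
  rw [FreeGroup.ext_hom (FreeGroup.lift of) (mk rels) fun _ => FreeGroup.lift_apply_of]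
  exact one_of_mem hr

end PresentedGroup

section Presentations

variable {G : Type*} [Group G]

theorem forall_triangle23Rels_lift_eq_one_iff (n : ℕ) (f : Fin 3 → G) :
    (∀ r ∈ triangle23Rels n, FreeGroup.lift f r = 1) ↔
      f 0 ^ n = 1 ∧ f 1 ^ 3 = 1 ∧ f 2 ^ 2 = 1 ∧ f 0 * f 1 * f 2 = 1 := by
  simp [triangle23Rels]

theorem forall_imageRels_lift_eq_one_iff (k : ℕ) (f : Fin 2 → G) :
    (∀ r ∈ imageRels k, FreeGroup.lift f r = 1) ↔
      f 0 ^ (2 * k + 1) = 1 ∧ f 1 ^ (2 * k + 1) = 1 ∧ (f 0 * f 1) ^ (2 * k + 1) = 1 ∧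
        ((f 0)⁻¹ * f 1 ^ k) ^ 2 = 1 ∧ (f 1 ^ k * f 0 ^ (k - 1)) ^ 3 = 1 := by
  simp [imageRels]

end Presentations

section OddOrder

variable {G : Type*} [Group G] {k : ℕ} {x : G}

theorem pow_succ_sq_of_pow_eq_one (h : x ^ (2 * k + 1) = 1) : (x ^ (k + 1)) ^ 2 = x := by
  rw [← pow_mul, show (k + 1) * 2 = 2 * k + 1 + 1 by ring, pow_succ, h, one_mul]

theorem sq_pow_succ_of_pow_eq_one (h : x ^ (2 * k + 1) = 1) : (x ^ 2) ^ (k + 1) = x := by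
  rw [pow_right_comm, pow_succ_sq_of_pow_eq_one h]

theorem sq_pow_of_pow_eq_one (h : x ^ (2 * k + 1) = 1) : (x ^ 2) ^ k = x⁻¹ :=
  eq_inv_of_mul_eq_one_left (by rw [← pow_mul, ← pow_succ, h])

theorem pow_eq_inv_pow_succ_of_pow_eq_one (h : x ^ (2 * k + 1) = 1) :
    x ^ k = (x ^ (k + 1))⁻¹ :=
  eq_inv_of_mul_eq_one_left (by rw [← pow_add, ← h]; ring_nf)

theorem pow_pred_mul_of_pow_eq_one (h : x ^ (2 * k + 1) = 1) : x ^ (k - 1) * x = x ^ k := by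
  rcases k with _ | k
  · -- `0 - 1 = 0` in `ℕ`, but then `x = x ^ 1 = 1`
    simpa using h
  · rw [Nat.add_sub_cancel, pow_succ]

theorem pow_mul_pow_pred_eq_one_iff (h : x ^ (2 * k + 1) = 1) (c : G) {m : ℕ} :
    (c * x ^ (k - 1)) ^ m = 1 ↔ (x⁻¹ * c * x ^ k) ^ m = 1 := by
  rw [← pow_pred_mul_of_pow_eq_one h, show x⁻¹ * c * (x ^ (k - 1) * x) =
    x⁻¹ * (c * x ^ (k - 1)) * x⁻¹⁻¹ by group, conj_pow, conj_eq_one_iff]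

end OddOrder

section Modular

variable {G : Type*} [Group G] {α u v : G}

theorem inv_eq_self_of_sq_eq_one (hv : v ^ 2 = 1) : v⁻¹ = v :=
  inv_eq_of_mul_eq_one_right (sq v ▸ hv)

theorem eq_inv_mul_of_mul_mul_eq_one (hv : v ^ 2 = 1) (huv : α * u * v = 1) : u = α⁻¹ * v := by
  rw [eq_inv_mul_iff_mul_eq, eq_inv_of_mul_eq_one_left huv, inv_eq_self_of_sq_eq_one hv]

theorem conj_pow_of_sq_eq_one (hv : v ^ 2 = 1) (x : G) (m : ℕ) :
    (v * x * v) ^ m = v * x ^ m * v := by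
  simpa only [inv_eq_self_of_sq_eq_one hv] using conj_pow (a := v) (b := x) (i := m)

variable (hv : v ^ 2 = 1) (h3 : (α⁻¹ * v) ^ 3 = 1)
include hv h3

theorem conj_inv_eq_of_sq_of_cube : v * α⁻¹ * v = α * v * α := by
  calc v * α⁻¹ * v = α * (α⁻¹ * v) ^ 3 * v⁻¹ * α := by rw [pow_three]; group
    _ = α * v * α := by rw [h3, inv_eq_self_of_sq_eq_one hv]; group

theorem conj_sq_eq_of_sq_of_cube : v * α ^ 2 * v = (α * v * α * (α * v * α))⁻¹ := by
  calc v * α ^ 2 * v = ((v * α⁻¹ * v) ^ 2)⁻¹ := by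
        rw [conj_pow_of_sq_eq_one hv, inv_pow, mul_inv_rev, mul_inv_rev, inv_inv,
          inv_eq_self_of_sq_eq_one hv, mul_assoc]
    _ = (α * v * α * (α * v * α))⁻¹ := by rw [conj_inv_eq_of_sq_of_cube hv h3, sq]

end Modular

section Triangle

variable {G : Type*} [Group G] {k : ℕ} {α v : G}
  (hα : α ^ (2 * k + 1) = 1) (hv : v ^ 2 = 1) (h3 : (α⁻¹ * v) ^ 3 = 1)
include hα hv

theorem conj_sq_pow_eq : (v * α ^ 2 * v) ^ k = v * α⁻¹ * v := by
  rw [conj_pow_of_sq_eq_one hv, sq_pow_of_pow_eq_one hα]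

include h3

theorem inv_sq_mul_conj_sq_pow : (α ^ 2)⁻¹ * (v * α ^ 2 * v) ^ k = α⁻¹ * v * α := by
  rw [conj_sq_pow_eq hα hv, conj_inv_eq_of_sq_of_cube hv h3]; group

theorem inv_sq_mul_conj_sq_pow_mul_sq_pow :
    (α ^ 2)⁻¹ * (v * α ^ 2 * v) ^ k * (α ^ 2) ^ k = α⁻¹ * v := by
  rw [inv_sq_mul_conj_sq_pow hα hv h3, sq_pow_of_pow_eq_one hα]; group

theorem sq_pow_mul_conj_sq_pow_mul_sq_pow :
    (α ^ 2) ^ k * (v * α ^ 2 * v) ^ k * (α ^ 2) ^ k = v := by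
  rw [sq_pow_of_pow_eq_one hα, conj_sq_pow_eq hα hv, conj_inv_eq_of_sq_of_cube hv h3]; group

theorem imageRels_lift_of_triangle :
    ∀ r ∈ imageRels k, FreeGroup.lift ![α ^ 2, v * α ^ 2 * v] r = 1 := by
  have hA : (α ^ 2) ^ (2 * k + 1) = 1 := by rw [pow_right_comm, hα, one_pow]
  have hB : (v * α ^ 2 * v) ^ (2 * k + 1) = 1 := by
    rw [conj_pow_of_sq_eq_one hv, hA, mul_one, ← sq, hv]
  have hAB : (α ^ 2 * (v * α ^ 2 * v)) ^ (2 * k + 1) = 1 := by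
    have : α ^ 2 * (v * α ^ 2 * v) = α * (v * α ^ 2 * v)⁻¹ * α⁻¹ := by
      nth_rw 1 [conj_sq_eq_of_sq_of_cube hv h3]; group
    rw [this, conj_pow, inv_pow, hB, inv_one, mul_one, mul_inv_cancel]
  have hS : ((α ^ 2)⁻¹ * (v * α ^ 2 * v) ^ k) ^ 2 = 1 := by
    rw [inv_sq_mul_conj_sq_pow hα hv h3, show α⁻¹ * v * α = α⁻¹ * v * α⁻¹⁻¹ by rw [inv_inv],
      conj_pow, hv, mul_one, mul_inv_cancel]
  have hC : ((v * α ^ 2 * v) ^ k * (α ^ 2) ^ (k - 1)) ^ 3 = 1 := by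
    rw [pow_mul_pow_pred_eq_one_iff hA, inv_sq_mul_conj_sq_pow_mul_sq_pow hα hv h3]
    exact h3
  exact (forall_imageRels_lift_eq_one_iff k _).2 ⟨hA, hB, hAB, hS, hC⟩

end Triangle

section Image

variable {G : Type*} [Group G] {k : ℕ} {a b : G} (ha : a ^ (2 * k + 1) = 1)
include ha

theorem pow_mul_pow_mul_pow_sq_eq_one (hs : (a⁻¹ * b ^ k) ^ 2 = 1) :
    (a ^ k * b ^ k * a ^ k) ^ 2 = 1 := by
  rw [show a ^ k * b ^ k * a ^ k = a ^ (k + 1) * (a⁻¹ * b ^ k) * (a ^ (k + 1))⁻¹ by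
      rw [← pow_eq_inv_pow_succ_of_pow_eq_one ha]; group,
    conj_pow, hs, mul_one, mul_inv_cancel]

theorem triangle23Rels_lift_of_image (hs : (a⁻¹ * b ^ k) ^ 2 = 1)
    (hc : (b ^ k * a ^ (k - 1)) ^ 3 = 1) :
    ∀ r ∈ triangle23Rels (2 * k + 1),
      FreeGroup.lift ![a ^ (k + 1), a⁻¹ * b ^ k * a ^ k, a ^ k * b ^ k * a ^ k] r = 1 := by
  have hα : (a ^ (k + 1)) ^ (2 * k + 1) = 1 := by rw [pow_right_comm, ha, one_pow]
  have hv := pow_mul_pow_mul_pow_sq_eq_one ha hs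
  have huv : a ^ (k + 1) * (a⁻¹ * b ^ k * a ^ k) * (a ^ k * b ^ k * a ^ k) = 1 := by
    rw [← hv, sq]; group
  exact (forall_triangle23Rels_lift_eq_one_iff _ _).2
    ⟨hα, (pow_mul_pow_pred_eq_one_iff ha _).1 hc, hv, huv⟩

theorem conj_pow_succ_sq_eq (hb : b ^ (2 * k + 1) = 1) (hs : (a⁻¹ * b ^ k) ^ 2 = 1)
    (hc : (b ^ k * a ^ (k - 1)) ^ 3 = 1) :
    a ^ k * b ^ k * a ^ k * (a ^ (k + 1)) ^ 2 * (a ^ k * b ^ k * a ^ k) = b := by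
  have hu : ((a ^ (k + 1))⁻¹ * (a ^ k * b ^ k * a ^ k)) ^ 3 = 1 := by
    rw [← (pow_mul_pow_pred_eq_one_iff ha _).1 hc]; group
  rw [conj_sq_eq_of_sq_of_cube (pow_mul_pow_mul_pow_sq_eq_one ha hs) hu,
    show a ^ (k + 1) * (a ^ k * b ^ k * a ^ k) * a ^ (k + 1) = b ^ k by
      rw [pow_eq_inv_pow_succ_of_pow_eq_one ha]; group,
    ← sq, pow_right_comm, sq_pow_of_pow_eq_one hb, inv_inv]

end Image

theorem image_group_iso_triangle23_general (k : ℕ) :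
    ∃ φ : PresentedGroup (imageRels k) ≃* PresentedGroup (triangle23Rels (2 * k + 1)),
      φ (PresentedGroup.of 0) = (PresentedGroup.of 0) ^ 2 ∧
      φ (PresentedGroup.of 1) =
        PresentedGroup.of 2 * (PresentedGroup.of 0) ^ 2 * PresentedGroup.of 2 ∧
      φ.symm (PresentedGroup.of 0) = (PresentedGroup.of 0) ^ (k + 1) ∧
      φ.symm (PresentedGroup.of 1) =
        (PresentedGroup.of 0)⁻¹ * (PresentedGroup.of 1) ^ k * (PresentedGroup.of 0) ^ k ∧
      φ.symm (PresentedGroup.of 2) =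
        (PresentedGroup.of 0) ^ k * (PresentedGroup.of 1) ^ k * (PresentedGroup.of 0) ^ k := by
  obtain ⟨ha, hb, -, hs, hc⟩ := (forall_imageRels_lift_eq_one_iff k _).1
    fun _ => PresentedGroup.lift_of_eq_one
  obtain ⟨hα, hu, hv, huv⟩ := (forall_triangle23Rels_lift_eq_one_iff (2 * k + 1) _).1
    fun _ => PresentedGroup.lift_of_eq_one
  have hu_eq := eq_inv_mul_of_mul_mul_eq_one hv huv
  have h3 := hu_eq ▸ hu
  let φ := PresentedGroup.toGroup (imageRels_lift_of_triangle hα hv h3)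
  let ψ := PresentedGroup.toGroup (triangle23Rels_lift_of_image ha hs hc)
  refine ⟨MonoidHom.toMulEquiv φ ψ ?_ ?_, ?_⟩
  · ext i
    fin_cases i
    · simpa [φ, ψ] using pow_succ_sq_of_pow_eq_one ha
    · simpa [φ, ψ] using conj_pow_succ_sq_eq ha hb hs hc
  · ext i
    fin_cases i
    · simpa [φ, ψ] using sq_pow_succ_of_pow_eq_one hα
    · simpa [φ, ψ] using (inv_sq_mul_conj_sq_pow_mul_sq_pow hα hv h3).trans hu_eq.symm
    · simpa [φ, ψ] using sq_pow_mul_conj_sq_pow_mul_sq_pow hα hv h3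
  · simp [φ, ψ]

/-- The group `⟨A,B | A^{2k+1} = B^{2k+1} = (AB)^{2k+1} = (A⁻¹Bᵏ)² = (BᵏA^{k-1})³ = 1⟩`
is isomorphic to the triangle group `Δ(2,3,2k+1)` via `A ↦ α²`, `B ↦ vα²v`, the inverse
sending `α ↦ A^{k+1}`, `u ↦ A⁻¹BᵏAᵏ`, `v ↦ AᵏBᵏAᵏ`. -/
theorem image_group_iso_triangle23 (k : ℕ) (hk : 1 ≤ k) :
    ∃ φ : PresentedGroup (imageRels k) ≃* PresentedGroup (triangle23Rels (2 * k + 1)),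
      φ (PresentedGroup.of 0) = (PresentedGroup.of 0) ^ 2 ∧
      φ (PresentedGroup.of 1) =
        PresentedGroup.of 2 * (PresentedGroup.of 0) ^ 2 * PresentedGroup.of 2 ∧
      φ.symm (PresentedGroup.of 0) = (PresentedGroup.of 0) ^ (k + 1) ∧
      φ.symm (PresentedGroup.of 1) =
        (PresentedGroup.of 0)⁻¹ * (PresentedGroup.of 1) ^ k * (PresentedGroup.of 0) ^ k ∧
      φ.symm (PresentedGroup.of 2) =
        (PresentedGroup.of 0) ^ k * (PresentedGroup.of 1) ^ k * (PresentedGroup.of 0) ^ k :=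
  image_group_iso_triangle23_general k
end

section
/- Let ζ : F_3 → F_6 be the group homomorphism from the free group on x_1, x_2, x_3 to the free group on y_1, z_1, y_2, z_2, y_3, z_3 defined by ζ(x_i) = [y_i, z_i]. Then for every k ≥ 1, ζ maps the k-th term of the lower central series of F_3 into the 2k-th term of the lower central series of F_6. -/
/-!
Every generator of `F₃` is sent to a commutator, so `ζ` maps `F₃` into `γ₂(F₆)`. The image
of `γₙ(F₃)` is the `n`-th lower central term of the image `ζ(F₃)`, and by the three subgroups
lemma `[γᵢ, γⱼ] ≤ γᵢ₊ⱼ`; hence a subgroup contained in `γ₂` has its `n`-th lower central term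
inside `γ₂ₙ`.
-/

open scoped commutatorElement

namespace Subgroup

variable {G : Type*} [Group G]

/-- The three subgroups lemma modulo a normal subgroup, proved in `G ⧸ N`. -/
theorem commutator_commutator_le_of_rotate {N A B C : Subgroup G} [N.Normal]
    (h₁ : ⁅⁅B, C⁆, A⁆ ≤ N) (h₂ : ⁅⁅C, A⁆, B⁆ ≤ N) : ⁅⁅A, B⁆, C⁆ ≤ N := by
  let π := QuotientGroup.mk' N
  have le_iff_map_eq_bot : ∀ H K L : Subgroup G,
      ⁅⁅H, K⁆, L⁆ ≤ N ↔ ⁅⁅H.map π, K.map π⁆, L.map π⁆ = ⊥ := fun H K L => by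
    rw [← map_commutator, ← map_commutator, map_eq_bot_iff, QuotientGroup.ker_mk']
  rw [le_iff_map_eq_bot] at h₁ h₂ ⊢
  exact commutator_commutator_eq_bot_of_rotate h₁ h₂

theorem commutator_lowerCentralSeries_le (m n : ℕ) :
    ⁅(⊤ : Subgroup G).lowerCentralSeries m, (⊤ : Subgroup G).lowerCentralSeries n⁆ ≤
      (⊤ : Subgroup G).lowerCentralSeries (m + n + 1) := by
  induction n generalizing m with
  | zero => rfl
  | succ n ih =>
    rw [lowerCentralSeries_succ, commutator_comm]
    apply commutator_commutator_le_of_rotate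
    · rw [commutator_comm ⊤, ← lowerCentralSeries_succ]
      exact (ih (m + 1)).trans_eq (by ring_nf)
    · calc ⁅⁅(⊤ : Subgroup G).lowerCentralSeries m, (⊤ : Subgroup G).lowerCentralSeries n⁆, ⊤⁆
          ≤ ⁅(⊤ : Subgroup G).lowerCentralSeries (m + n + 1), ⊤⁆ := commutator_mono (ih m) le_rfl
        _ = (⊤ : Subgroup G).lowerCentralSeries (m + (n + 1) + 1) := rfl

theorem lowerCentralSeries_le_of_le_lowerCentralSeries {S : Subgroup G} {j : ℕ}
    (hS : S ≤ (⊤ : Subgroup G).lowerCentralSeries j) (n : ℕ) :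
    S.lowerCentralSeries n ≤ (⊤ : Subgroup G).lowerCentralSeries (n * (j + 1) + j) := by
  induction n with
  | zero => simpa using hS
  | succ n ih =>
    calc S.lowerCentralSeries (n + 1)
        ≤ ⁅(⊤ : Subgroup G).lowerCentralSeries (n * (j + 1) + j),
            (⊤ : Subgroup G).lowerCentralSeries j⁆ := commutator_mono ih hS
      _ ≤ (⊤ : Subgroup G).lowerCentralSeries (n * (j + 1) + j + j + 1) :=
          commutator_lowerCentralSeries_le _ _
      _ = (⊤ : Subgroup G).lowerCentralSeries ((n + 1) * (j + 1) + j) := by ring_nf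

theorem map_lowerCentralSeries_le_of_range_le {H : Type*} [Group H] (f : G →* H) {j : ℕ}
    (hf : f.range ≤ (⊤ : Subgroup H).lowerCentralSeries j) (n : ℕ) :
    ((⊤ : Subgroup G).lowerCentralSeries n).map f ≤
      (⊤ : Subgroup H).lowerCentralSeries (n * (j + 1) + j) := by
  rw [map_lowerCentralSeries, ← MonoidHom.range_eq_map]
  exact lowerCentralSeries_le_of_le_lowerCentralSeries hf n

end Subgroup

theorem FreeGroup.range_lift_commutatorElement_le {α G : Type*} [Group G] (a b : α → G) :
    (FreeGroup.lift fun i => ⁅a i, b i⁆).range ≤ commutator G :=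
  FreeGroup.range_lift_le <| by
    rintro _ ⟨i, rfl⟩
    exact Subgroup.commutator_mem_commutator (Subgroup.mem_top _) (Subgroup.mem_top _)

theorem zeta_maps_lcs_into_double_general (k : ℕ)
    (ζ : FreeGroup (Fin 3) →* FreeGroup (Fin 3 × Bool))
    (hζ : ζ = FreeGroup.lift
      (fun i => ⁅FreeGroup.of ((i, false) : Fin 3 × Bool), FreeGroup.of ((i, true))⁆)) :
    ∀ x ∈ (⊤ : Subgroup (FreeGroup (Fin 3))).lowerCentralSeries (k - 1),
      ζ x ∈ (⊤ : Subgroup (FreeGroup (Fin 3 × Bool))).lowerCentralSeries (2 * k - 1) := by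
  intro x hx
  have hrange : ζ.range ≤ (⊤ : Subgroup (FreeGroup (Fin 3 × Bool))).lowerCentralSeries 1 :=
    hζ ▸ FreeGroup.range_lift_commutatorElement_le _ _
  have hζx := Subgroup.map_lowerCentralSeries_le_of_range_le ζ hrange (k - 1) ⟨x, hx, rfl⟩
  exact Subgroup.lowerCentralSeries_antitone ⊤ (by omega) hζx

/-- Let `ζ : F₃ → F₆` be the homomorphism from the free group on `x₀,x₁,x₂` to the free
group on `y₀,z₀,y₁,z₁,y₂,z₂` (indexed by `Fin 3 × Bool`, with `yᵢ = (i,false)`,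
`zᵢ = (i,true)`) defined by `ζ(xᵢ) = [yᵢ, zᵢ]`. Then for every `k ≥ 1`, `ζ` maps the
`k`-th term of the lower central series of `F₃` into the `2k`-th term of the lower
central series of `F₆`. (Here the `k`-th term `G_(k)` is `lowerCentralSeries G (k-1)`.) -/
theorem zeta_maps_lcs_into_double (k : ℕ) (hk : 1 ≤ k)
    (ζ : FreeGroup (Fin 3) →* FreeGroup (Fin 3 × Bool))
    (hζ : ζ = FreeGroup.lift
      (fun i => ⁅FreeGroup.of ((i, false) : Fin 3 × Bool), FreeGroup.of ((i, true))⁆)) :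
    ∀ x ∈ (⊤ : Subgroup (FreeGroup (Fin 3))).lowerCentralSeries (k - 1),
      ζ x ∈ (⊤ : Subgroup (FreeGroup (Fin 3 × Bool))).lowerCentralSeries (2 * k - 1) :=
  zeta_maps_lcs_into_double_general k ζ hζ
end
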